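/- For i = 1, …, M let X_i be n₁×n₁ real matrices and Y_i be n₂×n₂ real matrices, and define F_I(X₁, …, X_M, Y₁, …, Y_M) = inf over unit vectors v ∈ ℝ^M of ( ‖Σ_{i=1}^M v_i X_i‖_* − ‖Σ_{i=1}^M v_i Y_i‖_* ). Then F_I is Lipschitz with constant at most √(n₁ + n₂) with respect to the Euclidean norm on the concatenated tuple (X₁, …, X_M, Y₁, …, Y_M), i.e., the norm given by the square root of the sum of the squared Frobenius norms of the coordinate differences. -/

import Mathlib

open Matrix

/-- The nuclear norm of a real matrix: the sum of its singular values,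
i.e. the sum of the square roots of the eigenvalues of `Xᵀ * X`. -/
noncomputable def nuclearNorm {m n : Type*} [Fintype m] [Fintype n] [DecidableEq n]
    (X : Matrix m n ℝ) : ℝ :=
  ∑ i, Real.sqrt ((show (Xᵀ * X).IsHermitian by
    ext i j; simp [Matrix.mul_apply, mul_comm]).eigenvalues i)

/-- `F_I(X₁,…,X_M,Y₁,…,Y_M) = inf_{‖v‖=1} ‖Σ v_i X_i‖_* − ‖Σ v_i Y_i‖_*`. -/
noncomputable def FI {M n₁ n₂ : ℕ} (X : Fin M → Matrix (Fin n₁) (Fin n₁) ℝ)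
    (Y : Fin M → Matrix (Fin n₂) (Fin n₂) ℝ) : ℝ :=
  ⨅ v : {v : Fin M → ℝ // Real.sqrt (∑ i, v i ^ 2) = 1},
    nuclearNorm (∑ i, v.1 i • X i) - nuclearNorm (∑ i, v.1 i • Y i)

/-!
The nuclear norm is dual to the operator norm: `tr(Uᵀ B) ≤ ‖B‖_*` whenever `Uᵀ U ≤ 1`, with
equality at `B = A` for `U = A V diag(σᵢ⁻¹) Vᵀ`, where `Aᵀ A = V diag(σᵢ²) Vᵀ`. Hence it satisfies
the triangle inequality, and since it is at most `√n` times the Frobenius norm (Cauchy–Schwarz over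
the `n` singular values) it is `√n`-Lipschitz for that norm. For a unit vector `v`,
`‖Σ vᵢ Xᵢ‖_F ≤ (Σ ‖Xᵢ‖_F²)^(1/2)`, so when the two tuples move by `a` and `b` each function
minimised in `F_I` moves by at most `√n₁ a + √n₂ b ≤ √(n₁ + n₂) √(a² + b²)`, and this bound passes
to the infimum.
-/

open scoped Matrix.Norms.Frobenius

namespace Matrix

variable {m n : Type*} [Fintype m] [Fintype n]

theorem frobenius_norm_sq_eq_sum (A : Matrix m n ℝ) : ‖A‖ ^ 2 = ∑ i, ∑ j, A i j ^ 2 := by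
  rw [frobenius_norm_def, ← Real.sqrt_eq_rpow, Real.sq_sqrt (by positivity)]
  simp

theorem trace_transpose_mul_self_eq_frobenius_norm_sq (A : Matrix m n ℝ) :
    trace (Aᵀ * A) = ‖A‖ ^ 2 := by
  rw [frobenius_norm_sq_eq_sum, Finset.sum_comm]
  simp [trace, mul_apply, sq]

omit [Fintype n] in
theorem conjTranspose_mul_apply_self_le (P Q : Matrix m n ℝ) (k : n) :
    (Pᴴ * Q) k k ≤ √((Pᴴ * P) k k) * √((Qᴴ * Q) k k) := by
  simpa [mul_apply, sq] using Real.sum_mul_le_sqrt_mul_sqrt Finset.univ (P · k) (Q · k)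

theorem IsHermitian.exists_star_mul_mul_eq_diagonal [DecidableEq n] {S : Matrix n n ℝ}
    (hS : S.IsHermitian) : ∃ V ∈ unitaryGroup n ℝ, star V * S * V = diagonal hS.eigenvalues :=
  ⟨hS.eigenvectorUnitary, hS.eigenvectorUnitary.2,
    by simpa [Unitary.conjStarAlgAut_apply] using hS.conjStarAlgAut_star_eigenvectorUnitary⟩

end Matrix

section NuclearNorm

variable {m n : Type*} [Fintype m] [Fintype n] [DecidableEq n]

theorem nuclearNorm_nonneg (A : Matrix m n ℝ) : 0 ≤ nuclearNorm A :=
  Finset.sum_nonneg fun _ _ => Real.sqrt_nonneg _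

theorem trace_conjTranspose_mul_le_nuclearNorm {U : Matrix m n ℝ} (hU : (1 - Uᴴ * U).PosSemidef)
    (B : Matrix m n ℝ) : trace (Uᴴ * B) ≤ nuclearNorm B := by
  have hB : (Bᵀ * B).IsHermitian := isHermitian_conjTranspose_mul_self B
  obtain ⟨V, hV, hVB⟩ := hB.exists_star_mul_mul_eq_diagonal
  have htrace : trace (Uᴴ * B) = trace ((U * V)ᴴ * (B * V)) := by
    rw [conjTranspose_mul, ← star_eq_conjTranspose, ← Matrix.mul_assoc, trace_mul_cycle,
      ← Matrix.mul_assoc, mem_unitaryGroup_iff.mp hV, Matrix.one_mul]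
  have hUV : ∀ k, ((U * V)ᴴ * (U * V)) k k ≤ 1 := by
    intro k
    have h := (hU.conjTranspose_mul_mul_same V).diag_nonneg (i := k)
    rw [Matrix.mul_sub, Matrix.mul_one, Matrix.sub_mul, ← star_eq_conjTranspose,
      mem_unitaryGroup_iff'.mp hV, Matrix.sub_apply, one_apply_eq] at h
    have hconj : (U * V)ᴴ * (U * V) = star V * (Uᴴ * U) * V := by
      rw [conjTranspose_mul, star_eq_conjTranspose]
      simp only [Matrix.mul_assoc]
    rw [hconj]
    linarith
  have hBV : (B * V)ᴴ * (B * V) = diagonal hB.eigenvalues := by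
    rw [← hVB, conjTranspose_mul, conjTranspose_eq_transpose_of_trivial B, star_eq_conjTranspose]
    simp only [Matrix.mul_assoc]
  calc trace (Uᴴ * B) = ∑ k, ((U * V)ᴴ * (B * V)) k k := htrace
    _ ≤ ∑ k, √(((U * V)ᴴ * (U * V)) k k) * √(((B * V)ᴴ * (B * V)) k k) :=
        Finset.sum_le_sum fun k _ => conjTranspose_mul_apply_self_le _ _ k
    _ ≤ ∑ k, √(hB.eigenvalues k) := by
        refine Finset.sum_le_sum fun k _ => ?_
        rw [hBV, diagonal_apply_eq]
        exact mul_le_of_le_one_left (Real.sqrt_nonneg _) (Real.sqrt_le_one.mpr (hUV k))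
    _ = nuclearNorm B := rfl

theorem exists_trace_conjTranspose_mul_eq_nuclearNorm (A : Matrix m n ℝ) :
    ∃ U : Matrix m n ℝ, (1 - Uᴴ * U).PosSemidef ∧ trace (Uᴴ * A) = nuclearNorm A := by
  have hA : (Aᵀ * A).IsHermitian := isHermitian_conjTranspose_mul_self A
  obtain ⟨V, hV, hVA⟩ := hA.exists_star_mul_mul_eq_diagonal
  set e := hA.eigenvalues
  -- since `(√0)⁻¹ = 0`, `W` is the pseudo-inverse of `√(Aᵀ A)`
  set W := V * diagonal (fun i => (√(e i))⁻¹) * star V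
  have hW : Wᴴ = W := by
    simp only [W, conjTranspose_mul, star_eq_conjTranspose, conjTranspose_conjTranspose,
      diagonal_conjTranspose, star_trivial, Matrix.mul_assoc]
  refine ⟨A * W, ?_, ?_⟩
  · have hWW : (A * W)ᴴ * (A * W) =
        V * (diagonal (fun i => (√(e i))⁻¹) * (star V * (Aᵀ * A) * V) *
          diagonal (fun i => (√(e i))⁻¹)) * star V := by
      rw [conjTranspose_mul, hW, conjTranspose_eq_transpose_of_trivial]
      simp only [W, Matrix.mul_assoc]
    have h : 1 - (A * W)ᴴ * (A * W) =
        V * (1 - diagonal (fun i => (√(e i))⁻¹ * e i * (√(e i))⁻¹)) * star V := by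
      rw [hWW, hVA, diagonal_mul_diagonal, diagonal_mul_diagonal, Matrix.mul_sub, Matrix.sub_mul,
        Matrix.mul_one, mem_unitaryGroup_iff.mp hV]
    rw [h, star_eq_conjTranspose, ← diagonal_one, diagonal_sub]
    refine (posSemidef_diagonal_iff.mpr fun i => ?_).mul_mul_conjTranspose_same V
    rw [inv_mul_eq_div, Real.div_sqrt, sub_nonneg]
    exact mul_inv_le_one
  · calc trace ((A * W)ᴴ * A)
        = trace (diagonal (fun i => (√(e i))⁻¹) * (star V * (Aᵀ * A) * V)) := by
          rw [conjTranspose_mul, hW, conjTranspose_eq_transpose_of_trivial, Matrix.mul_assoc,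
            show W = V * (diagonal _ * star V) from Matrix.mul_assoc _ _ _, Matrix.mul_assoc V,
            trace_mul_comm V]
          simp only [Matrix.mul_assoc]
      _ = nuclearNorm A := by
          rw [hVA, diagonal_mul_diagonal, trace_diagonal]
          exact Finset.sum_congr rfl fun i _ => by rw [inv_mul_eq_div, Real.div_sqrt]

theorem nuclearNorm_add_le (A B : Matrix m n ℝ) :
    nuclearNorm (A + B) ≤ nuclearNorm A + nuclearNorm B := by
  obtain ⟨U, hU, hUAB⟩ := exists_trace_conjTranspose_mul_eq_nuclearNorm (A + B)
  rw [← hUAB, Matrix.mul_add, trace_add]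
  exact add_le_add (trace_conjTranspose_mul_le_nuclearNorm hU A)
    (trace_conjTranspose_mul_le_nuclearNorm hU B)

theorem nuclearNorm_le_sqrt_card_mul_norm (A : Matrix m n ℝ) :
    nuclearNorm A ≤ √(Fintype.card n) * ‖A‖ := by
  have hA : (Aᵀ * A).IsHermitian := isHermitian_conjTranspose_mul_self A
  have he : ∀ i, 0 ≤ hA.eigenvalues i := eigenvalues_conjTranspose_mul_self_nonneg A
  calc nuclearNorm A = ∑ i, √1 * √(hA.eigenvalues i) := by simp [nuclearNorm]
    _ ≤ √(∑ _i : n, 1) * √(∑ i, hA.eigenvalues i) :=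
        Real.sum_sqrt_mul_sqrt_le _ (fun _ => zero_le_one) he
    _ = √(Fintype.card n) * ‖A‖ := by
        have htr : ∑ i, hA.eigenvalues i = trace (Aᵀ * A) := by
          simpa using hA.trace_eq_sum_eigenvalues.symm
        rw [htr, trace_transpose_mul_self_eq_frobenius_norm_sq, Real.sqrt_sq (norm_nonneg A)]
        simp

theorem abs_nuclearNorm_sub_nuclearNorm_le (A B : Matrix m n ℝ) :
    |nuclearNorm A - nuclearNorm B| ≤ √(Fintype.card n) * ‖A - B‖ := by
  have hAB := nuclearNorm_add_le B (A - B)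
  have hBA := nuclearNorm_add_le A (B - A)
  rw [add_sub_cancel] at hAB
  rw [add_sub_cancel] at hBA
  have h₁ := nuclearNorm_le_sqrt_card_mul_norm (A - B)
  have h₂ := nuclearNorm_le_sqrt_card_mul_norm (B - A)
  rw [norm_sub_rev] at h₂
  rw [abs_sub_le_iff]
  constructor <;> linarith

end NuclearNorm

theorem norm_sum_smul_le {ι E : Type*} [Fintype ι] [SeminormedAddCommGroup E] [NormedSpace ℝ E]
    (v : ι → ℝ) (C : ι → E) : ‖∑ i, v i • C i‖ ≤ √(∑ i, v i ^ 2) * √(∑ i, ‖C i‖ ^ 2) :=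
  calc ‖∑ i, v i • C i‖ ≤ ∑ i, ‖v i‖ * ‖C i‖ := by
        simpa only [norm_smul] using norm_sum_le Finset.univ fun i => v i • C i
    _ ≤ √(∑ i, ‖v i‖ ^ 2) * √(∑ i, ‖C i‖ ^ 2) := Real.sum_mul_le_sqrt_mul_sqrt _ _ _
    _ = √(∑ i, v i ^ 2) * √(∑ i, ‖C i‖ ^ 2) := by simp only [Real.norm_eq_abs, sq_abs]

theorem Real.sqrt_mul_sqrt_add_sqrt_mul_sqrt_le {a b x y : ℝ} (ha : 0 ≤ a) (hb : 0 ≤ b)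
    (hx : 0 ≤ x) (hy : 0 ≤ y) : √a * √x + √b * √y ≤ √(a + b) * √(x + y) := by
  simpa [Fin.sum_univ_two] using Real.sum_sqrt_mul_sqrt_le Finset.univ
    (f := ![a, b]) (g := ![x, y]) (Fin.forall_fin_two.mpr ⟨ha, hb⟩)
    (Fin.forall_fin_two.mpr ⟨hx, hy⟩)

theorem abs_ciInf_sub_ciInf_le {ι : Type*} {f g : ι → ℝ} {c : ℝ} (hf : BddBelow (Set.range f))
    (hc : 0 ≤ c) (hfg : ∀ i, |f i - g i| ≤ c) : |(⨅ i, f i) - ⨅ i, g i| ≤ c := by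
  rcases isEmpty_or_nonempty ι with hι | hι
  · simpa [Real.iInf_of_isEmpty] using hc
  obtain ⟨b, hb⟩ := hf
  have hg : BddBelow (Set.range g) := ⟨b - c, by
    rintro _ ⟨i, rfl⟩
    linarith [hb ⟨i, rfl⟩, (abs_le.mp (hfg i)).2]⟩
  rw [abs_sub_le_iff]
  constructor
  · have h : (⨅ i, f i) - c ≤ ⨅ i, g i :=
      le_ciInf fun i => by linarith [ciInf_le ⟨b, hb⟩ i, (abs_le.mp (hfg i)).2]
    linarith
  · have h : (⨅ i, g i) - c ≤ ⨅ i, f i :=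
      le_ciInf fun i => by linarith [ciInf_le hg i, (abs_le.mp (hfg i)).1]
    linarith

section UnitSphere

variable {ι : Type*} [Fintype ι] {m n : Type*} [Fintype m] [Fintype n] [DecidableEq n]

theorem abs_nuclearNorm_sum_smul_sub_le {v : ι → ℝ} (hv : √(∑ i, v i ^ 2) = 1)
    (X X' : ι → Matrix m n ℝ) :
    |nuclearNorm (∑ i, v i • X i) - nuclearNorm (∑ i, v i • X' i)| ≤
      √(Fintype.card n) * √(∑ i, ‖X i - X' i‖ ^ 2) := by
  refine (abs_nuclearNorm_sub_nuclearNorm_le _ _).trans ?_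
  rw [← Finset.sum_sub_distrib]
  simp_rw [← smul_sub]
  simpa [hv] using mul_le_mul_of_nonneg_left (norm_sum_smul_le v (fun i => X i - X' i))
    (Real.sqrt_nonneg _)

theorem bddBelow_range_nuclearNorm_sum_smul_sub {m' n' : Type*} [Fintype m'] [Fintype n']
    [DecidableEq n'] (X : ι → Matrix m n ℝ) (Y : ι → Matrix m' n' ℝ) :
    BddBelow (Set.range fun v : {v : ι → ℝ // √(∑ i, v i ^ 2) = 1} =>
      nuclearNorm (∑ i, v.1 i • X i) - nuclearNorm (∑ i, v.1 i • Y i)) := by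
  refine ⟨-(√(Fintype.card n') * √(∑ i, ‖Y i‖ ^ 2)), ?_⟩
  rintro _ ⟨v, rfl⟩
  have hY := (nuclearNorm_le_sqrt_card_mul_norm (∑ i, v.1 i • Y i)).trans
    (mul_le_mul_of_nonneg_left (norm_sum_smul_le v.1 Y) (Real.sqrt_nonneg _))
  rw [v.2, one_mul] at hY
  linarith [nuclearNorm_nonneg (∑ i, v.1 i • X i)]

end UnitSphere

/-- `F_I` is Lipschitz with constant at most `√(n₁ + n₂)` for the Euclidean norm
given by the square root of the sum of squared Frobenius norms of the
coordinate differences. -/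
theorem stmt9 (M n₁ n₂ : ℕ)
    (X X' : Fin M → Matrix (Fin n₁) (Fin n₁) ℝ)
    (Y Y' : Fin M → Matrix (Fin n₂) (Fin n₂) ℝ) :
    |FI X Y - FI X' Y'| ≤ Real.sqrt (n₁ + n₂) *
      Real.sqrt ((∑ i, ∑ a, ∑ b, (X i a b - X' i a b) ^ 2) +
        (∑ i, ∑ a, ∑ b, (Y i a b - Y' i a b) ^ 2)) := by
  have hsq : ∀ {k : ℕ} (A A' : Fin M → Matrix (Fin k) (Fin k) ℝ),
      ∑ i, ∑ a, ∑ b, (A i a b - A' i a b) ^ 2 = ∑ i, ‖A i - A' i‖ ^ 2 := fun A A' => by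
    simp [frobenius_norm_sq_eq_sum]
  rw [hsq, hsq]
  refine abs_ciInf_sub_ciInf_le (bddBelow_range_nuclearNorm_sum_smul_sub X Y)
    (mul_nonneg (Real.sqrt_nonneg _) (Real.sqrt_nonneg _)) fun v => ?_
  calc _ ≤ |nuclearNorm (∑ i, v.1 i • X i) - nuclearNorm (∑ i, v.1 i • X' i)| +
        |nuclearNorm (∑ i, v.1 i • Y i) - nuclearNorm (∑ i, v.1 i • Y' i)| := by
        rw [sub_sub_sub_comm]
        exact abs_sub _ _
    _ ≤ √n₁ * √(∑ i, ‖X i - X' i‖ ^ 2) + √n₂ * √(∑ i, ‖Y i - Y' i‖ ^ 2) := by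
        simpa using add_le_add (abs_nuclearNorm_sum_smul_sub_le v.2 X X')
          (abs_nuclearNorm_sum_smul_sub_le v.2 Y Y')
    _ ≤ √(n₁ + n₂) * √(∑ i, ‖X i - X' i‖ ^ 2 + ∑ i, ‖Y i - Y' i‖ ^ 2) :=
        Real.sqrt_mul_sqrt_add_sqrt_mul_sqrt_le (by positivity) (by positivity) (by positivity)
          (by positivity)
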